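/- The squared pseudo-hyperbolic distance ψ(λ,μ) = |(λ − μ)/(1 − conj(μ)λ)|² on the open unit disk 𝔻 is conditionally negative definite: for all n, all λ_1,…,λ_n ∈ 𝔻 and all c_1,…,c_n ∈ ℂ with ∑_j c_j = 0, one has ∑_{i,j} conj(c_i) c_j ψ(λ_i, λ_j) ≤ 0. -/

import Mathlib

/-!
Writing `S λ μ = (1 - conj λ * μ)⁻¹` for the Szegő kernel,
`1 - ψ(λ, μ) = (1 - |λ|²)(1 - |μ|²) |S λ μ|²`.
The Szegő kernel is positive semidefinite, being the sum of the rank-one kernels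
`conj λᵏ μᵏ`; by the Schur product theorem so is `|S|² = S ⊙ Sᵀ`, and hence,
after rescaling by the diagonal `1 - |λ|²`, so is `1 - ψ`.
When `∑ cⱼ = 0` the constant `1` contributes nothing to the quadratic form, leaving
`-∑ conj cᵢ cⱼ (1 - ψ(λᵢ, λⱼ)) ≤ 0`.
-/

open scoped ComplexOrder ComplexConjugate

/-- The squared pseudo-hyperbolic distance on the open unit disk. -/
noncomputable def pseudoHypDistSq (l m : ℂ) : ℝ :=
  ‖(l - m) / (1 - conj m * l)‖ ^ 2

open Matrix

namespace Matrix

theorem PosSemidef.of_hasSum {n κ 𝕜 : Type*} [Fintype n] [RCLike 𝕜] {M : κ → Matrix n n 𝕜}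
    {A : Matrix n n 𝕜} (hA : HasSum M A) (hM : ∀ k, (M k).PosSemidef) : A.PosSemidef := by
  refine .of_dotProduct_mulVec_nonneg ?_ fun x ↦ ?_
  · refine hA.matrix_conjTranspose.unique ?_
    simpa only [(hM _).isHermitian.eq] using hA
  · let quadForm : Matrix n n 𝕜 →+ 𝕜 :=
      { toFun B := star x ⬝ᵥ B *ᵥ x
        map_zero' := by simp
        map_add' B C := by simp [add_mulVec, dotProduct_add] }
    have hcont : Continuous quadForm :=
      continuous_const.dotProduct (continuous_id.matrix_mulVec continuous_const)
    exact (hA.map quadForm hcont).nonneg fun k ↦ (hM k).dotProduct_mulVec_nonneg x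

end Matrix

theorem RCLike.norm_conj_mul_lt_one {𝕜 : Type*} [RCLike 𝕜] {a b : 𝕜} (ha : ‖a‖ < 1)
    (hb : ‖b‖ < 1) : ‖conj a * b‖ < 1 := by
  rw [norm_mul, RCLike.norm_conj]
  exact mul_lt_one_of_nonneg_of_lt_one_left (norm_nonneg a) ha hb.le

namespace Matrix

variable {n 𝕜 : Type*} [RCLike 𝕜]

def szegoKernel (l : n → 𝕜) : Matrix n n 𝕜 :=
  of fun i j ↦ (1 - conj (l i) * l j)⁻¹

theorem hasSum_szegoKernel {l : n → 𝕜} (hl : ∀ i, ‖l i‖ < 1) :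
    HasSum (fun k : ℕ ↦ vecMulVec (star (l ^ k)) (l ^ k)) (szegoKernel l) := by
  refine Pi.hasSum.mpr fun i ↦ Pi.hasSum.mpr fun j ↦ ?_
  simpa [szegoKernel, vecMulVec_apply, mul_pow] using
    hasSum_geometric_of_norm_lt_one (RCLike.norm_conj_mul_lt_one (hl i) (hl j))

theorem posSemidef_szegoKernel [Fintype n] {l : n → 𝕜} (hl : ∀ i, ‖l i‖ < 1) :
    (szegoKernel l).PosSemidef :=
  .of_hasSum (hasSum_szegoKernel hl) fun _ ↦ posSemidef_vecMulVec_star_self _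

end Matrix

theorem one_sub_pseudoHypDistSq {a b : ℂ} (ha : ‖a‖ < 1) (hb : ‖b‖ < 1) :
    1 - pseudoHypDistSq a b = (1 - ‖a‖ ^ 2) * (1 - ‖b‖ ^ 2) / ‖1 - conj b * a‖ ^ 2 := by
  have hden : ‖1 - conj b * a‖ ≠ 0 := by
    have := norm_sub_norm_le 1 (conj b * a)
    have := RCLike.norm_conj_mul_lt_one hb ha
    rw [norm_one] at *
    linarith
  have key : ‖1 - conj b * a‖ ^ 2 - ‖a - b‖ ^ 2 = (1 - ‖a‖ ^ 2) * (1 - ‖b‖ ^ 2) := by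
    simp only [Complex.sq_norm, Complex.normSq_apply, Complex.sub_re, Complex.one_re,
      Complex.mul_re, Complex.conj_re, Complex.conj_im, Complex.sub_im, Complex.one_im,
      Complex.mul_im]
    ring
  rw [pseudoHypDistSq, norm_div, div_pow, ← key, sub_div, div_self (pow_ne_zero 2 hden)]

theorem posSemidef_one_sub_pseudoHypDistSq {n : Type*} [Fintype n] {l : n → ℂ}
    (hl : ∀ i, ‖l i‖ < 1) :
    (of fun i j ↦ ((1 - pseudoHypDistSq (l i) (l j) : ℝ) : ℂ)).PosSemidef := by
  classical
  let d : Matrix n n ℂ := diagonal fun i ↦ ((1 - ‖l i‖ ^ 2 : ℝ) : ℂ)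
  have hK : (of fun i j ↦ ((1 - pseudoHypDistSq (l i) (l j) : ℝ) : ℂ)) =
      dᴴ * (szegoKernel l ⊙ (szegoKernel l)ᵀ) * d := by
    ext i j
    have hconj : 1 - conj (l i) * l j = conj (1 - conj (l j) * l i) := by simp [mul_comm]
    have hS : (szegoKernel l ⊙ (szegoKernel l)ᵀ) i j =
        ((‖1 - conj (l j) * l i‖ ^ 2 : ℝ) : ℂ)⁻¹ := by
      rw [hadamard_apply, transpose_apply, szegoKernel, of_apply, of_apply, hconj, ← mul_inv,
        mul_comm, Complex.mul_conj', Complex.ofReal_pow]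
    rw [of_apply, one_sub_pseudoHypDistSq (hl i) (hl j), mul_diagonal, diagonal_conjTranspose,
      diagonal_mul, hS, Pi.star_apply, Complex.star_def, Complex.conj_ofReal]
    push_cast
    ring
  have hS := posSemidef_szegoKernel hl
  rw [hK]
  exact (hS.hadamard hS.transpose).conjTranspose_mul_mul_same d

/-- The squared pseudo-hyperbolic distance is conditionally negative definite on the
open unit disk: for points `λᵢ ∈ 𝔻` and scalars `cᵢ` with `∑ cᵢ = 0`, the quadratic
form is `≤ 0`. -/
theorem pseudoHypDistSq_condNegDef
    (n : ℕ) (l : Fin n → ℂ) (hl : ∀ i, ‖l i‖ < 1)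
    (c : Fin n → ℂ) (hc : ∑ j, c j = 0) :
    ∑ i, ∑ j, conj (c i) * c j * (pseudoHypDistSq (l i) (l j) : ℂ) ≤ 0 := by
  set K : Matrix (Fin n) (Fin n) ℂ := of fun i j ↦ ((1 - pseudoHypDistSq (l i) (l j) : ℝ) : ℂ)
  have hsplit : ∑ i, ∑ j, conj (c i) * c j * (pseudoHypDistSq (l i) (l j) : ℂ) =
      conj (∑ i, c i) * ∑ j, c j - star c ⬝ᵥ (K *ᵥ c) := by
    rw [map_sum, Finset.sum_mul_sum]
    simp only [dotProduct, mulVec, Finset.mul_sum, ← Finset.sum_sub_distrib]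
    refine Finset.sum_congr rfl fun i _ ↦ Finset.sum_congr rfl fun j _ ↦ ?_
    simp only [K, of_apply, Pi.star_apply, Complex.star_def]
    push_cast
    ring
  rw [hsplit, hc, mul_zero, zero_sub, neg_nonpos]
  exact (posSemidef_one_sub_pseudoHypDistSq hl).dotProduct_mulVec_nonneg c
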